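/- arXiv:math/0605430 — 3 statements merged into one kernel-verified Lean document; each statement's English description precedes it below -/
import Mathlib

section
/- Ei(−1) = γ − Σ_{n=1}^∞ (-1)^{n-1}/(n!·n), where Ei(−1) = −∫_1^∞ e^{-t}/t dt. -/
open Real

open MeasureTheory Set Filter Topology intervalIntegral

lemma abs_log_integrableOn : IntegrableOn (fun t : ℝ => |Real.log t|) (Set.Ioc 0 1) := by
  have h1 : IntervalIntegrable (fun t : ℝ => t ^ (-(1/2) : ℝ)) volume 0 1 :=
    intervalIntegral.intervalIntegrable_rpow' (by norm_num)
  have h2 : IntegrableOn (fun t : ℝ => t ^ (-(1/2) : ℝ)) (Set.Ioc 0 1) := by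
    rwa [intervalIntegrable_iff_integrableOn_Ioc_of_le zero_le_one] at h1
  refine Integrable.mono (h2.const_mul 2) measurable_log.abs.aestronglyMeasurable.restrict ?_
  rw [ae_restrict_iff' measurableSet_Ioc]
  filter_upwards with t ht
  have ht0 : 0 < t := ht.1
  have hs : (0:ℝ) < t ^ ((1/2):ℝ) := rpow_pos_of_pos ht0 _
  have hlog : Real.log (t ^ ((1/2):ℝ)) = (1/2) * Real.log t := Real.log_rpow ht0 _
  have h3 : -Real.log (t ^ ((1/2):ℝ)) ≤ (t ^ ((1/2):ℝ))⁻¹ := by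
    rw [← Real.log_inv]
    have := Real.log_le_sub_one_of_pos (inv_pos.2 hs)
    linarith
  have hinv : (t ^ ((1/2):ℝ))⁻¹ = t ^ (-(1/2):ℝ) := by
    rw [← Real.rpow_neg ht0.le]
  have habs : |Real.log t| = -Real.log t := abs_of_nonpos (Real.log_nonpos ht0.le ht.2)
  have hb : |Real.log t| ≤ 2 * t ^ (-(1/2):ℝ) := by
    rw [habs, ← hinv]
    nlinarith [h3, hlog]
  rw [Real.norm_eq_abs, Real.norm_eq_abs, abs_abs]
  refine hb.trans (le_abs_self _)

lemma pow_mul_log_intervalIntegrable (n : ℕ) :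
    IntegrableOn (fun t : ℝ => t ^ n * Real.log t) (Set.Ioc 0 1) := by
  refine Integrable.mono abs_log_integrableOn
    ((measurable_id.pow_const n).mul measurable_log).aestronglyMeasurable.restrict ?_
  rw [ae_restrict_iff' measurableSet_Ioc]
  filter_upwards with t ht
  rw [Real.norm_eq_abs, Real.norm_eq_abs, abs_abs, abs_mul, abs_pow]
  have : |t| ^ n ≤ 1 := by
    refine pow_le_one₀ (abs_nonneg t) ?_
    rw [abs_of_pos ht.1]; exact ht.2
  nlinarith [abs_nonneg (Real.log t)]

lemma integral_pow_mul_log (n : ℕ) :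
    ∫ t in Set.Ioc (0:ℝ) 1, t ^ n * Real.log t = -(1 / ((n:ℝ) + 1) ^ 2) := by
  have hne : ((n:ℝ) + 1) ≠ 0 := by positivity
  set F : ℝ → ℝ := fun t => t ^ (n+1) / ((n:ℝ)+1) * Real.log t - t ^ (n+1) / ((n:ℝ)+1)^2
    with hF
  have hderiv : ∀ t ∈ Set.Ioo (0:ℝ) 1, HasDerivAt F (t ^ n * Real.log t) t := by
    intro t ht
    have h1 : HasDerivAt (fun t : ℝ => t ^ (n+1) / ((n:ℝ)+1) * Real.log t)
        (t ^ n * Real.log t + t ^ n / ((n:ℝ)+1)) t := by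
      have := ((hasDerivAt_pow (n+1) t).div_const ((n:ℝ)+1)).mul (Real.hasDerivAt_log ht.1.ne')
      refine this.congr_deriv ?_
      have ht' : t ≠ 0 := ht.1.ne'
      push_cast
      field_simp
      ring
    have h2 : HasDerivAt (fun t : ℝ => t ^ (n+1) / ((n:ℝ)+1)^2) (t ^ n / ((n:ℝ)+1)) t := by
      have := (hasDerivAt_pow (n+1) t).div_const (((n:ℝ)+1)^2)
      refine this.congr_deriv ?_
      push_cast
      field_simp
    have h12 := h1.sub h2
    simp only [add_sub_cancel_right] at h12
    exact h12
  have hint : IntervalIntegrable (fun t : ℝ => t ^ n * Real.log t) volume 0 1 := by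
    rw [intervalIntegrable_iff_integrableOn_Ioc_of_le zero_le_one]
    exact pow_mul_log_intervalIntegrable n
  have ha : Tendsto F (𝓝[>] (0:ℝ)) (𝓝 0) := by
    have h1 : Tendsto (fun t : ℝ => Real.log t * t ^ ((n:ℝ)+1)) (𝓝[>] 0) (𝓝 0) :=
      tendsto_log_mul_rpow_nhdsGT_zero (by positivity)
    have h2 : Tendsto (fun t : ℝ => t ^ (n+1) / ((n:ℝ)+1)^2) (𝓝[>] (0:ℝ)) (𝓝 0) := by
      have : Tendsto (fun t : ℝ => t ^ (n+1) / ((n:ℝ)+1)^2) (𝓝 (0:ℝ)) (𝓝 0) := by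
        have := ((continuous_pow (n+1)).div_const (((n:ℝ)+1)^2)).tendsto (0:ℝ)
        simpa using this
      exact this.mono_left nhdsWithin_le_nhds
    have h3 : Tendsto (fun t : ℝ => t ^ (n+1) / ((n:ℝ)+1) * Real.log t) (𝓝[>] (0:ℝ)) (𝓝 0) := by
      have := h1.div_const ((n:ℝ)+1)
      rw [zero_div] at this
      refine this.congr' ?_
      filter_upwards [self_mem_nhdsWithin] with t (ht : (0:ℝ) < t)
      rw [← Real.rpow_natCast t (n+1)]
      push_cast
      ring
    simpa using h3.sub h2
  have hb : Tendsto F (𝓝[<] (1:ℝ)) (𝓝 (-(1 / ((n:ℝ)+1)^2))) := by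
    have hc : ContinuousAt F 1 := by
      apply ContinuousAt.sub
      · exact (((continuous_pow (n+1)).continuousAt).div_const _).mul
          (Real.continuousAt_log one_ne_zero)
      · exact ((continuous_pow (n+1)).continuousAt).div_const _
    have : F 1 = -(1 / ((n:ℝ)+1)^2) := by simp [hF]
    rw [← this]
    exact hc.continuousWithinAt.tendsto
  have := intervalIntegral.integral_eq_sub_of_hasDerivAt_of_tendsto zero_lt_one hderiv hint ha hb
  rw [intervalIntegral.integral_of_le zero_le_one] at this
  rw [this]; ring

lemma norm_integral_term (n : ℕ) :
    ∫ t in Set.Ioc (0:ℝ) 1, ‖Real.log t * ((-t) ^ n / (Nat.factorial n : ℝ))‖ =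
      1 / (((n:ℝ) + 1) ^ 2 * (Nat.factorial n : ℝ)) := by
  have h : ∀ t ∈ Set.Ioc (0:ℝ) 1, ‖Real.log t * ((-t) ^ n / (Nat.factorial n : ℝ))‖ =
      -(t ^ n * Real.log t) / (Nat.factorial n : ℝ) := by
    intro t ht
    rw [Real.norm_eq_abs, abs_mul, abs_div, abs_pow, abs_neg,
      abs_of_pos ht.1, Nat.abs_cast,
      abs_of_nonpos (Real.log_nonpos ht.1.le ht.2)]
    ring
  rw [setIntegral_congr_fun measurableSet_Ioc h]
  rw [MeasureTheory.integral_div]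
  rw [MeasureTheory.integral_neg, integral_pow_mul_log n]
  field_simp

lemma exp_series_integral :
    ∫ t in Set.Ioc (0:ℝ) 1, Real.log t * Real.exp (-t) =
      -∑' n : ℕ, (-1) ^ n / ((Nat.factorial (n + 1) : ℝ) * ((n:ℝ) + 1)) := by
  set F : ℕ → ℝ → ℝ := fun n t => Real.log t * ((-t) ^ n / (Nat.factorial n : ℝ)) with hF
  have hF_int : ∀ n, Integrable (F n) (volume.restrict (Set.Ioc (0:ℝ) 1)) := by
    intro n
    have : F n = fun t => ((-1)^n / (Nat.factorial n : ℝ)) * (t ^ n * Real.log t) := by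
      funext t; simp only [hF]; rw [neg_pow]; ring
    rw [this]
    exact (pow_mul_log_intervalIntegrable n).const_mul _
  have hF_sum : Summable fun n => ∫ t in Set.Ioc (0:ℝ) 1, ‖F n t‖ := by
    simp_rw [hF, norm_integral_term]
    refine Summable.of_nonneg_of_le (fun n => by positivity) (fun n => ?_)
      (by simpa using Real.summable_pow_div_factorial 1)
    rw [one_div, mul_inv]
    have h1 : (((n:ℝ)+1)^2)⁻¹ ≤ 1 := by
      have : (1:ℝ) ≤ ((n:ℝ)+1)^2 := by nlinarith [Nat.cast_nonneg (α := ℝ) n]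
      rw [inv_le_one_iff₀]; right; exact this
    have h2 : (0:ℝ) < ((Nat.factorial n : ℝ))⁻¹ := by positivity
    nlinarith
  have key := MeasureTheory.integral_tsum_of_summable_integral_norm hF_int hF_sum
  have hpt : ∀ t : ℝ, ∑' n, F n t = Real.log t * Real.exp (-t) := by
    intro t
    rw [Real.exp_eq_exp_ℝ, NormedSpace.exp_eq_tsum_div, ← tsum_mul_left]
  have h2 : ∀ n, ∫ t in Set.Ioc (0:ℝ) 1, F n t =
      -((-1) ^ n / ((Nat.factorial (n + 1) : ℝ) * ((n:ℝ) + 1))) := by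
    intro n
    have : F n = fun t => ((-1)^n / (Nat.factorial n : ℝ)) * (t ^ n * Real.log t) := by
      funext t; simp only [hF]; rw [neg_pow]; ring
    rw [this, MeasureTheory.integral_const_mul, integral_pow_mul_log n]
    rw [Nat.factorial_succ]
    push_cast
    field_simp
  simp_rw [hpt] at key
  rw [← key]
  simp_rw [h2]
  rw [tsum_neg]

lemma integrableOn_log_exp_Ioi :
    IntegrableOn (fun t : ℝ => Real.log t * Real.exp (-t)) (Set.Ioi 1) := by
  have hG : IntegrableOn (fun x : ℝ => Real.exp (-x) * x ^ ((2:ℝ) - 1)) (Set.Ioi 0) :=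
    Real.GammaIntegral_convergent (by norm_num)
  refine Integrable.mono (hG.mono_set (Set.Ioi_subset_Ioi zero_le_one))
    (measurable_log.mul (measurable_exp.comp measurable_neg)).aestronglyMeasurable.restrict ?_
  rw [ae_restrict_iff' measurableSet_Ioi]
  filter_upwards with t ht
  have ht1 : (1:ℝ) < t := ht
  have ht0 : (0:ℝ) < t := lt_trans zero_lt_one ht1
  have hlog : 0 ≤ Real.log t := Real.log_nonneg ht1.le
  have hloglt : Real.log t ≤ t := (Real.log_le_sub_one_of_pos ht0).trans (by linarith)
  rw [Real.norm_eq_abs, Real.norm_eq_abs, abs_mul, abs_of_nonneg hlog,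
    abs_of_pos (Real.exp_pos _), abs_of_nonneg (by positivity : (0:ℝ) ≤ Real.exp (-t) * t ^ ((2:ℝ)-1))]
  have : t ^ ((2:ℝ) - 1) = t := by
    norm_num
  rw [this]
  nlinarith [Real.exp_pos (-t)]

lemma integrableOn_exp_div_Ioi :
    IntegrableOn (fun t : ℝ => Real.exp (-t) / t) (Set.Ioi 1) := by
  have h : IntegrableOn (fun t : ℝ => Real.exp (-1 * t)) (Set.Ioi 1) :=
    exp_neg_integrableOn_Ioi 1 one_pos
  refine Integrable.mono h ((measurable_exp.comp measurable_neg).div measurable_id).aestronglyMeasurable.restrict ?_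
  rw [ae_restrict_iff' measurableSet_Ioi]
  filter_upwards with t ht
  have ht1 : (1:ℝ) < t := ht
  rw [Real.norm_eq_abs, Real.norm_eq_abs, abs_div, abs_of_pos (Real.exp_pos _),
    abs_of_pos (lt_trans zero_lt_one ht1), abs_of_pos (Real.exp_pos _), neg_one_mul]
  rw [div_le_iff₀ (lt_trans zero_lt_one ht1)]
  nlinarith [Real.exp_pos (-t)]

lemma tail_eq :
    ∫ t in Set.Ioi (1:ℝ), Real.log t * Real.exp (-t) =
      ∫ t in Set.Ioi (1:ℝ), Real.exp (-t) / t := by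
  set F : ℝ → ℝ := fun t => -Real.exp (-t) * Real.log t with hF
  have hderiv : ∀ t ∈ Set.Ici (1:ℝ), HasDerivAt F
      (Real.log t * Real.exp (-t) - Real.exp (-t) / t) t := by
    intro t ht
    have ht0 : (0:ℝ) < t := lt_of_lt_of_le zero_lt_one ht
    have h1 : HasDerivAt (fun t : ℝ => -Real.exp (-t)) (Real.exp (-t)) t := by
      exact ((Real.hasDerivAt_exp (-t)).comp t (hasDerivAt_neg t)).neg.congr_deriv (by simp)
    have := h1.mul (Real.hasDerivAt_log ht0.ne')
    refine this.congr_deriv ?_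
    field_simp
    ring
  have hint : IntegrableOn (fun t : ℝ =>
      Real.log t * Real.exp (-t) - Real.exp (-t) / t) (Set.Ioi 1) :=
    integrableOn_log_exp_Ioi.sub integrableOn_exp_div_Ioi
  have htop : Tendsto F atTop (𝓝 0) := by
    have h1 : Tendsto (fun t : ℝ => t ^ 1 * Real.exp (-t)) atTop (𝓝 0) :=
      tendsto_pow_mul_exp_neg_atTop_nhds_zero 1
    have h2 : Tendsto (fun t : ℝ => Real.exp (-t) * Real.log t) atTop (𝓝 0) := by
      refine squeeze_zero' ?_ ?_ (by simpa using h1)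
      · filter_upwards [eventually_ge_atTop (1:ℝ)] with t ht
        have := Real.log_nonneg ht
        positivity
      · filter_upwards [eventually_ge_atTop (1:ℝ)] with t ht
        have ht0 : (0:ℝ) < t := lt_of_lt_of_le zero_lt_one ht
        have hloglt : Real.log t ≤ t := (Real.log_le_sub_one_of_pos ht0).trans (by linarith)
        have := Real.exp_pos (-t)
        nlinarith
    have := h2.neg
    rw [neg_zero] at this
    simpa [hF, neg_mul] using this
  have key := MeasureTheory.integral_Ioi_of_hasDerivAt_of_tendsto' hderiv hint htop
  have hF1 : F 1 = 0 := by simp [hF]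
  rw [hF1, sub_zero] at key
  have := MeasureTheory.integral_sub integrableOn_log_exp_Ioi integrableOn_exp_div_Ioi
  rw [key] at this
  linarith [this]

lemma integral_log_exp_Ioi_zero :
    ∫ t in Set.Ioi (0:ℝ), Real.log t * Real.exp (-t) = -eulerMascheroniConstant := by
  have hc : HasDerivAt Complex.GammaIntegral
      (∫ t : ℝ in Set.Ioi 0, (t:ℂ) ^ ((1:ℂ) - 1) * (Real.log t * Real.exp (-t))) 1 :=
    Complex.hasDerivAt_GammaIntegral (by norm_num)
  have hval : (∫ t : ℝ in Set.Ioi 0, (t:ℂ) ^ ((1:ℂ) - 1) * (Real.log t * Real.exp (-t)))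
      = ((∫ t : ℝ in Set.Ioi 0, Real.log t * Real.exp (-t) : ℝ) : ℂ) := by
    have hfun2 : ∀ t : ℝ, (t:ℂ) ^ ((1:ℂ) - 1) * (Real.log t * Real.exp (-t))
        = ((Real.log t * Real.exp (-t) : ℝ) : ℂ) := by
      intro t
      rw [sub_self, Complex.cpow_zero, one_mul]
      push_cast
      ring
    simp_rw [hfun2]
    exact integral_ofReal
  rw [hval] at hc
  have heq : Complex.Gamma =ᶠ[𝓝 (1:ℂ)] Complex.GammaIntegral := by
    have hopen : IsOpen {s : ℂ | 0 < s.re} := isOpen_lt continuous_const Complex.continuous_re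
    filter_upwards [hopen.mem_nhds (by norm_num : (0:ℝ) < (1:ℂ).re)] with s hs
    exact Complex.Gamma_eq_integral hs
  have hg : HasDerivAt Complex.Gamma
      ((∫ t : ℝ in Set.Ioi 0, Real.log t * Real.exp (-t) : ℝ) : ℂ) 1 :=
    hc.congr_of_eventuallyEq heq
  have hg1 : HasDerivAt Complex.Gamma
      ((∫ t : ℝ in Set.Ioi 0, Real.log t * Real.exp (-t) : ℝ) : ℂ) ((1:ℝ):ℂ) := by
    simpa using hg
  have hr := hg1.real_of_complex
  have hfun : (fun x : ℝ => (Complex.Gamma (x:ℂ)).re) = Real.Gamma := by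
    funext x
    rw [Complex.Gamma_ofReal]
    simp
  rw [hfun] at hr
  have := Real.hasDerivAt_Gamma_one.unique hr
  simp only [Complex.ofReal_re] at this
  linarith

lemma integrableOn_log_exp_Ioc :
    IntegrableOn (fun t : ℝ => Real.log t * Real.exp (-t)) (Set.Ioc 0 1) := by
  refine Integrable.mono abs_log_integrableOn
    (measurable_log.mul (measurable_exp.comp measurable_neg)).aestronglyMeasurable.restrict ?_
  rw [ae_restrict_iff' measurableSet_Ioc]
  filter_upwards with t ht
  rw [Real.norm_eq_abs, Real.norm_eq_abs, abs_abs, abs_mul, abs_of_pos (Real.exp_pos _)]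
  have h1 : Real.exp (-t) ≤ 1 := Real.exp_le_one_iff.2 (by linarith [ht.1])
  nlinarith [abs_nonneg (Real.log t), Real.exp_pos (-t)]


/-- `Ei(-1) = γ - ∑_{n≥1} (-1)^{n-1}/(n!·n)`, where
`Ei(-1) = -∫_1^∞ e^{-t}/t dt`. -/
theorem Ei_neg_one_eq :
    -(∫ t in Set.Ioi (1 : ℝ), Real.exp (-t) / t) =
      eulerMascheroniConstant -
        ∑' n : ℕ, (-1) ^ n / ((Nat.factorial (n + 1) : ℝ) * (n + 1)) := by
  have hsplit : ∫ t in Set.Ioi (0:ℝ), Real.log t * Real.exp (-t) =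
      (∫ t in Set.Ioc (0:ℝ) 1, Real.log t * Real.exp (-t)) +
      ∫ t in Set.Ioi (1:ℝ), Real.log t * Real.exp (-t) := by
    rw [← MeasureTheory.setIntegral_union (Set.Ioc_disjoint_Ioi le_rfl) measurableSet_Ioi
      integrableOn_log_exp_Ioc integrableOn_log_exp_Ioi,
      Set.Ioc_union_Ioi_eq_Ioi zero_le_one]
  rw [integral_log_exp_Ioi_zero, exp_series_integral, tail_eq] at hsplit
  have : ∑' n : ℕ, (-1) ^ n / ((Nat.factorial (n + 1) : ℝ) * ((n:ℕ) + 1 : ℝ)) =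
      ∑' n : ℕ, (-1) ^ n / ((Nat.factorial (n + 1) : ℝ) * ((n:ℝ) + 1)) := rfl
  rw [this]
  linarith
end

section
/- For all complex z with Re(z) > 1, the Kurepa function satisfies the functional equation K(z) − K(z−1) = Γ(z), where K(z) = ∫₀^∞ e^{-t}(t^z − 1)/(t − 1) dt and Γ(z) = ∫₀^∞ e^{-t} t^{z-1} dt. -/
/-!
On `t > 0`, `t ≠ 1` the two integrands differ by `e^{-t} t^{z-1}`, the Euler integrand of `Γ(z)`,
so the identity is linearity of the integral once both integrals converge. Convergence for
`Re w > 0` comes from the mean value theorem on `[1, t]`: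
`|(t^w - 1)/(t - 1)| ≤ |w| (t^{Re w - 1} + 1)`, a sum of Gamma integrands (for `Re w` and `1`).
-/

open MeasureTheory Set Real

lemma Real.rpow_le_rpow_add_one_of_mem_uIcc {t u : ℝ} (ht : 0 < t) (hu : u ∈ uIcc 1 t)
    (a : ℝ) :
    u ^ a ≤ t ^ a + 1 := by
  have hmin : 0 < min 1 t := lt_min one_pos ht
  have hu0 : 0 < u := hmin.trans_le hu.1
  have ht_pow : 0 ≤ t ^ a := rpow_nonneg ht.le a
  rcases le_total 0 a with ha | ha
  · calc u ^ a ≤ (max 1 t) ^ a := rpow_le_rpow hu0.le hu.2 ha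
      _ ≤ t ^ a + 1 := by rcases max_choice 1 t with h | h <;> simp [h, ht_pow]
  · calc u ^ a ≤ (min 1 t) ^ a := rpow_le_rpow_of_nonpos hmin hu.1 ha
      _ ≤ t ^ a + 1 := by rcases min_choice 1 t with h | h <;> simp [h, ht_pow]

lemma Complex.norm_ofReal_cpow_sub_one_le (w : ℂ) {t : ℝ} (ht : 0 < t) :
    ‖(t : ℂ) ^ w - 1‖ ≤ ‖w‖ * (t ^ (w.re - 1) + 1) * ‖t - 1‖ := by
  have hpos : ∀ u ∈ uIcc 1 t, 0 < u := fun u hu => (lt_min one_pos ht).trans_le hu.1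
  have hderiv : ∀ u ∈ uIcc 1 t, HasDerivWithinAt (fun u : ℝ => (u : ℂ) ^ w)
      (w * (u : ℂ) ^ (w - 1)) (uIcc 1 t) u := fun u hu => by
    simpa using (((hasDerivAt_id (u : ℂ)).cpow_const
      (ofReal_mem_slitPlane.2 (hpos u hu))).comp_ofReal).hasDerivWithinAt
  have hbound :
      ∀ u ∈ uIcc 1 t, ‖w * (u : ℂ) ^ (w - 1)‖ ≤ ‖w‖ * (t ^ (w.re - 1) + 1) :=
    fun u hu => by
      rw [norm_mul, norm_cpow_eq_rpow_re_of_pos (hpos u hu), sub_re, one_re]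
      exact mul_le_mul_of_nonneg_left (rpow_le_rpow_add_one_of_mem_uIcc ht hu _) (norm_nonneg w)
  simpa using (convex_uIcc 1 t).norm_image_sub_le_of_norm_hasDerivWithin_le hderiv hbound
    left_mem_uIcc right_mem_uIcc

-- At `t = 1` the left side is `‖0 / 0‖ = 0`.
lemma Complex.norm_ofReal_cpow_sub_one_div_le (w : ℂ) {t : ℝ} (ht : 0 < t) :
    ‖((t : ℂ) ^ w - 1) / ((t : ℂ) - 1)‖ ≤ ‖w‖ * (t ^ (w.re - 1) + 1) := by
  rw [norm_div]
  refine div_le_of_le_mul₀ (norm_nonneg _) (by positivity) ?_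
  simpa [← ofReal_one, ← ofReal_sub] using norm_ofReal_cpow_sub_one_le w ht

lemma integrableOn_kurepa_integrand {w : ℂ} (hw : 0 < w.re) :
    IntegrableOn (fun t : ℝ => (Real.exp (-t) : ℂ) * ((t : ℂ) ^ w - 1) / ((t : ℂ) - 1))
      (Ioi 0) := by
  have hmajorant :
      IntegrableOn (fun t => ‖w‖ * (Real.exp (-t) * t ^ (w.re - 1) + Real.exp (-t))) (Ioi 0) :=
    ((GammaIntegral_convergent hw).add (integrableOn_exp_neg_Ioi 0)).const_mul _
  refine hmajorant.mono' (Measurable.aestronglyMeasurable (by fun_prop))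
    ((ae_restrict_iff' measurableSet_Ioi).2 ?_)
  filter_upwards with t (ht : 0 < t)
  rw [mul_div_assoc, norm_mul, Complex.norm_real, norm_of_nonneg (exp_pos _).le]
  calc Real.exp (-t) * ‖((t : ℂ) ^ w - 1) / ((t : ℂ) - 1)‖
      ≤ Real.exp (-t) * (‖w‖ * (t ^ (w.re - 1) + 1)) :=
        mul_le_mul_of_nonneg_left (Complex.norm_ofReal_cpow_sub_one_div_le w ht) (exp_pos _).le
    _ = ‖w‖ * (Real.exp (-t) * t ^ (w.re - 1) + Real.exp (-t)) := by ring

lemma Complex.cpow_sub_one_div_sub_one_sub {x : ℂ} (hx0 : x ≠ 0) (hx1 : x ≠ 1) (z : ℂ) :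
    (x ^ z - 1) / (x - 1) - (x ^ (z - 1) - 1) / (x - 1) = x ^ (z - 1) := by
  have hx1' : x - 1 ≠ 0 := sub_ne_zero.2 hx1
  rw [← sub_div, div_eq_iff hx1', sub_sub_sub_cancel_right, cpow_sub _ _ hx0, cpow_one]
  field_simp

noncomputable def kurepa (z : ℂ) : ℂ :=
  ∫ t in Set.Ioi (0 : ℝ), (Real.exp (-t) : ℂ) * ((t : ℂ) ^ z - 1) / ((t : ℂ) - 1)

/-- For `Re z > 1`, the Kurepa function satisfies `K(z) - K(z-1) = Γ(z)`. -/
theorem kurepa_functional_equation (z : ℂ) (hz : 1 < z.re) :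
    kurepa z - kurepa (z - 1) = Complex.Gamma z := by
  have hz0 : 0 < z.re := by linarith
  have hz1 : 0 < (z - 1).re := by simpa using hz
  rw [kurepa, kurepa, ← integral_sub (integrableOn_kurepa_integrand hz0)
    (integrableOn_kurepa_integrand hz1), Complex.Gamma_eq_integral hz0, Complex.GammaIntegral]
  refine setIntegral_congr_ae measurableSet_Ioi ?_
  filter_upwards [Measure.ae_ne volume 1] with t ht1 (ht0 : 0 < t)
  rw [mul_div_assoc, mul_div_assoc, ← mul_sub, Complex.cpow_sub_one_div_sub_one_sub
    (Complex.ofReal_ne_zero.2 ht0.ne') (by exact_mod_cast ht1)]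
end

section
/- For all complex z with Re(z) > 1, the alternating Kurepa function satisfies A(z) + A(z−1) = Γ(z+1), where A(z) = ∫₀^∞ e^{-t}(t^{z+1} − (−1)^z t)/(t+1) dt with (−1)^z := e^{iπz}. -/
open Complex MeasureTheory Set

/-- The alternating Kurepa function
`A(z) = ∫₀^∞ e^{-t}(t^{z+1} - (-1)^z t)/(t + 1) dt`, with `(-1)^z := e^{iπz}`. -/
noncomputable def altKurepa (z : ℂ) : ℂ :=
  ∫ t in Set.Ioi (0 : ℝ),
    (Real.exp (-t) : ℂ) * ((t : ℂ) ^ (z + 1) - Complex.exp (Real.pi * I * z) * t) / ((t : ℂ) + 1)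

set_option maxHeartbeats 1000000 in
lemma aux_integrable (w : ℂ) (hw : 0 < w.re) :
    IntegrableOn (fun t : ℝ => (Real.exp (-t) : ℂ) * (t : ℂ) ^ w / ((t : ℂ) + 1))
      (Set.Ioi 0) := by
  have h1 : IntegrableOn (fun t : ℝ => (Real.exp (-t) : ℂ) * (t : ℂ) ^ w) (Set.Ioi 0) := by
    have := Complex.GammaIntegral_convergent (s := w + 1) (by simp only [Complex.add_re, Complex.one_re]; linarith)
    simpa using this
  refine Integrable.mono' (g := fun t : ℝ => ‖(Real.exp (-t) : ℂ) * (t : ℂ) ^ w‖)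
    h1.norm ?_ ?_
  · refine (ContinuousOn.div ?_ ?_ ?_).aestronglyMeasurable measurableSet_Ioi
    · exact ((Complex.continuous_ofReal.comp continuous_neg.rexp).mul
        (Complex.continuous_ofReal_cpow_const hw)).continuousOn
    · exact (Complex.continuous_ofReal.add continuous_const).continuousOn
    · intro t ht
      have ht' : (0:ℝ) < t := ht
      intro h
      have := congrArg Complex.re h
      simp at this
      linarith
  · filter_upwards [self_mem_ae_restrict measurableSet_Ioi] with t ht
    rw [norm_div]
    have h2 : (1 : ℝ) ≤ ‖(t : ℂ) + 1‖ := by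
      rw [show ((t : ℂ) + 1) = ((t + 1 : ℝ) : ℂ) by push_cast; ring, Complex.norm_real,
        Real.norm_eq_abs, abs_of_pos (by linarith [mem_Ioi.mp ht])]
      linarith [mem_Ioi.mp ht]
    exact div_le_self (norm_nonneg _) h2

lemma main_integrable (z : ℂ) (hz : 0 < z.re) :
    IntegrableOn (fun t : ℝ =>
      (Real.exp (-t) : ℂ) * ((t : ℂ) ^ (z + 1) - Complex.exp (Real.pi * I * z) * t) /
        ((t : ℂ) + 1)) (Set.Ioi 0) := by
  have h1 := aux_integrable (z + 1) (by simp; linarith)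
  have h2 := (aux_integrable 1 (by simp)).smul (Complex.exp (Real.pi * I * z))
  have h3 := h1.sub h2
  refine MeasureTheory.IntegrableOn.congr_fun h3 (fun t ht => ?_) measurableSet_Ioi
  simp only [Pi.sub_apply, Pi.smul_apply, smul_eq_mul, Complex.cpow_one]
  ring

/-- For `Re z > 1`, the alternating Kurepa function satisfies
`A(z) + A(z-1) = Γ(z+1)`. -/
theorem altKurepa_functional_equation (z : ℂ) (hz : 1 < z.re) :
    altKurepa z + altKurepa (z - 1) = Complex.Gamma (z + 1) := by
  rw [altKurepa, altKurepa,
    ← MeasureTheory.integral_add (main_integrable z (by linarith))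
      (main_integrable (z - 1) (by simp; linarith)),
    Complex.Gamma_eq_integral (by simp; linarith : 0 < (z + 1).re), Complex.GammaIntegral]
  refine setIntegral_congr_fun measurableSet_Ioi (fun t ht => ?_)
  have ht0 : (0 : ℝ) < t := ht
  have htne : (t : ℂ) ≠ 0 := by exact_mod_cast ht0.ne'
  have hden : (t : ℂ) + 1 ≠ 0 := by
    intro h
    have : (t : ℂ) = -1 := by linear_combination h
    rw [this] at htne
    exact absurd (by exact_mod_cast congrArg Complex.re this) (by norm_num; linarith)
  have hpow : (t : ℂ) ^ (z + 1) = (t : ℂ) ^ z * t := by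
    rw [Complex.cpow_add _ _ htne, Complex.cpow_one]
  have hexp : Complex.exp (Real.pi * I * (z - 1)) = -Complex.exp (Real.pi * I * z) := by
    rw [mul_sub, mul_one, Complex.exp_sub, Complex.exp_pi_mul_I]
    ring
  have h4 : z - 1 + 1 = z := by ring
  have h5 : z + 1 - 1 = z := by ring
  rw [h4, h5, hpow, hexp]
  field_simp
  ring
end
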